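/- arXiv:2007.00028 — 2 statements merged into one kernel-verified Lean document; each statement's English description precedes it below -/
import Mathlib

section
/- Let x_1,…,x_m ∈ ℝ^d satisfy max_i ‖x_i‖ ≤ 1 and be separable with margin γ ∈ (0,1], let ℓ be the logistic loss, and consider stochastic gradient descent with step size 1: i_1, i_2, … i.i.d. uniform on {1,…,m}, w_1 = 0, w_{t+1} = w_t − ℓ'(x_{i_t}ᵀw_t)·x_{i_t}, and averaged iterate v_T = (1/T)Σ_{t=1}^T w_t. Then for any T > 1/γ² and any α ∈ [0,1], letting δ denote the (random) fraction of indices i ∈ {1,…,m} for which x_iᵀ(v_T/‖v_T‖) ≤ (1−α)γ/5, the expectation of δ over the randomness of SGD is at most (8 + 4log²(γ²T))/(3γ²T^α). Equivalently, with δ of this expectation, at least (1−δ)·m of the indices satisfy x_iᵀ(v_T/‖v_T‖) > (1−α)γ/5. -/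
/-!
Compare SGD with the scaled separator `u = (log (γ² T) / γ) • w₀`, whose logistic loss is at most
`(γ² T)⁻¹` on every point. The logistic loss is convex and self-bounding (`ℓ'² ≤ ℓ / 2`), so for
`‖x‖ ≤ 1` one SGD step decreases `‖w - u‖²` by at least `(3/2) ℓ(xᵀw) - 2 ℓ(xᵀu)`. Telescoping over
`T` steps bounds the total loss on the sampled points by `2 (log² (γ² T) + 2) / (3 γ²)`, and every
iterate, hence `v_T`, by `2 (log (γ² T) + 1) / γ` in norm.

The sample drawn at step `t` is independent of `w_t`, so in expectation the loss on it equals the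
empirical risk of `w_t`; by convexity the empirical risk of `v_T` is at most the average of these.
Finally, a point with normalized margin at most `(1 - α) γ / 5` has margin at most
`(1 - α) · 2 (log (γ² T) + 1) / 5 ≤ (1 - α) log T` against `v_T`, hence logistic loss at least
`(1 + T^(1-α))⁻¹`, and Markov's inequality turns the risk bound into the bound on `δ`.
-/

open scoped RealInnerProductSpace
open Real Finset

noncomputable def logisticLoss (z : ℝ) : ℝ := log (1 + exp (-z))

theorem hasDerivAt_logisticLoss (z : ℝ) : HasDerivAt logisticLoss (-(1 + exp z)⁻¹) z := by
  have h : HasDerivAt logisticLoss (exp (-z) * -1 / (1 + exp (-z))) z :=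
    ((hasDerivAt_neg z).exp.const_add 1).log (by positivity)
  convert h using 1
  rw [exp_neg]
  field_simp
  ring

theorem deriv_logisticLoss : deriv logisticLoss = fun z => -(1 + exp z)⁻¹ :=
  funext fun z => (hasDerivAt_logisticLoss z).deriv

theorem logisticLoss_nonneg (z : ℝ) : 0 ≤ logisticLoss z :=
  log_nonneg (by linarith [exp_pos (-z)])

theorem logisticLoss_le_exp_neg (z : ℝ) : logisticLoss z ≤ exp (-z) := by
  unfold logisticLoss
  linarith [log_le_sub_one_of_pos (x := 1 + exp (-z)) (by positivity)]

theorem antitone_logisticLoss : Antitone logisticLoss := fun y z h =>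
  log_le_log (by positivity) (by linarith [exp_le_exp.2 (neg_le_neg h)])

theorem inv_one_add_exp_le_logisticLoss (z : ℝ) : (1 + exp z)⁻¹ ≤ logisticLoss z := by
  have h := one_sub_inv_le_log_of_pos (x := 1 + exp (-z)) (by positivity)
  have e : 1 - (1 + exp (-z))⁻¹ = (1 + exp z)⁻¹ := by
    rw [exp_neg]
    field_simp
    ring
  exact e ▸ h

theorem convexOn_logisticLoss : ConvexOn ℝ Set.univ logisticLoss := by
  refine Monotone.convexOn_univ_of_deriv (fun z => (hasDerivAt_logisticLoss z).differentiableAt) ?_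
  rw [deriv_logisticLoss]
  exact fun y z h => neg_le_neg (inv_anti₀ (by positivity) (by linarith [exp_le_exp.2 h]))

theorem deriv_logisticLoss_sq_le (z : ℝ) : deriv logisticLoss z ^ 2 ≤ logisticLoss z / 2 := by
  set a := exp (-z)
  have ha : 0 < a := exp_pos _
  have hpade : 2 * a / (a + 2) ≤ logisticLoss z := le_log_one_add_of_nonneg ha.le
  have hinv : (1 + exp z)⁻¹ = a / (1 + a) := by
    simp only [a, exp_neg]
    field_simp
    ring
  have key : (a / (1 + a)) ^ 2 ≤ (2 * a / (a + 2)) / 2 := by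
    rw [div_pow, div_div, div_le_div_iff₀ (by positivity) (by positivity)]
    nlinarith
  rw [deriv_logisticLoss, neg_sq, hinv]
  linarith

theorem ConvexOn.mul_sub_le_of_hasDerivAt {S : Set ℝ} {f : ℝ → ℝ} {f' y z : ℝ}
    (hf : ConvexOn ℝ S f) (hy : y ∈ S) (hz : z ∈ S) (hd : HasDerivAt f f' y) :
    f' * (z - y) ≤ f z - f y := by
  rcases lt_trichotomy y z with h | rfl | h
  · have := hf.le_slope_of_hasDerivAt hy hz h hd
    rwa [slope_def_field, le_div_iff₀ (sub_pos.2 h)] at this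
  · simp
  · have := hf.slope_le_of_hasDerivAt hz hy h hd
    rw [slope_def_field, div_le_iff₀ (sub_pos.2 h)] at this
    linarith

theorem deriv_logisticLoss_mul_sub_le (y z : ℝ) :
    deriv logisticLoss y * (z - y) ≤ logisticLoss z - logisticLoss y :=
  convexOn_logisticLoss.mul_sub_le_of_hasDerivAt trivial trivial
    (hasDerivAt_logisticLoss y).differentiableAt.hasDerivAt

section SGD

variable {E : Type*} [NormedAddCommGroup E] [InnerProductSpace ℝ E]

/-- `sgdIterate ℓ' a k` is the paper's `w_{k+1}`; the step from it to `w_{k+2}` uses the sample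
`a k`. -/
noncomputable def sgdIterate (ℓ' : ℝ → ℝ) (a : ℕ → E) : ℕ → E
  | 0 => 0
  | k + 1 => sgdIterate ℓ' a k - ℓ' ⟪a k, sgdIterate ℓ' a k⟫ • a k

noncomputable def sgdAverage (ℓ' : ℝ → ℝ) (a : ℕ → E) (T : ℕ) : E :=
  (T : ℝ)⁻¹ • ∑ k ∈ range T, sgdIterate ℓ' a k

theorem sgdIterate_congr (ℓ' : ℝ → ℝ) {a b : ℕ → E} {n : ℕ} (h : ∀ k < n, a k = b k) :
    sgdIterate ℓ' a n = sgdIterate ℓ' b n := by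
  induction n with
  | zero => rfl
  | succ n ih =>
    simp only [sgdIterate, ih fun k hk => h k (by omega), h n (by omega)]

theorem eq_sgdIterate_of_succ_eq {ℓ' : ℝ → ℝ} {b W : ℕ → E} {T : ℕ} (h1 : W 1 = 0)
    (hrec : ∀ t, 1 ≤ t → t < T → W (t + 1) = W t - ℓ' ⟪b t, W t⟫ • b t) :
    ∀ k < T, W (k + 1) = sgdIterate ℓ' (fun k => b (k + 1)) k
  | 0, _ => h1
  | k + 1, hk => by
    rw [hrec (k + 1) (by omega) hk, eq_sgdIterate_of_succ_eq h1 hrec k (by omega)]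
    rfl

variable {ℓ ℓ' : ℝ → ℝ}

theorem norm_sgd_step_sub_sq_le (hgrad : ∀ y z, ℓ' y * (z - y) ≤ ℓ z - ℓ y)
    (hsq : ∀ z, ℓ' z ^ 2 ≤ ℓ z / 2) {a : E} (ha : ‖a‖ ≤ 1) (w u : E) :
    3 / 2 * ℓ ⟪a, w⟫ + ‖w - ℓ' ⟪a, w⟫ • a - u‖ ^ 2 ≤ ‖w - u‖ ^ 2 + 2 * ℓ ⟪a, u⟫ := by
  have hexp : ‖w - ℓ' ⟪a, w⟫ • a - u‖ ^ 2
      = ‖w - u‖ ^ 2 - 2 * (ℓ' ⟪a, w⟫ * (⟪a, w⟫ - ⟪a, u⟫)) + ℓ' ⟪a, w⟫ ^ 2 * ‖a‖ ^ 2 := by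
    rw [show w - ℓ' ⟪a, w⟫ • a - u = (w - u) - ℓ' ⟪a, w⟫ • a by abel, norm_sub_sq_real,
      real_inner_smul_right, real_inner_comm a, inner_sub_right, norm_smul, mul_pow,
      Real.norm_eq_abs, sq_abs]
  have ha2 : ℓ' ⟪a, w⟫ ^ 2 * ‖a‖ ^ 2 ≤ ℓ' ⟪a, w⟫ ^ 2 :=
    mul_le_of_le_one_right (sq_nonneg _) (pow_le_one₀ (norm_nonneg a) ha)
  rw [hexp]
  nlinarith [hgrad ⟪a, w⟫ ⟪a, u⟫, hsq ⟪a, w⟫]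

theorem sgdIterate_potential_le (hgrad : ∀ y z, ℓ' y * (z - y) ≤ ℓ z - ℓ y)
    (hsq : ∀ z, ℓ' z ^ 2 ≤ ℓ z / 2) {a : ℕ → E} (ha : ∀ k, ‖a k‖ ≤ 1) {u : E} {ε : ℝ}
    (hu : ∀ k, ℓ ⟪a k, u⟫ ≤ ε) (n : ℕ) :
    3 / 2 * ∑ k ∈ range n, ℓ ⟪a k, sgdIterate ℓ' a k⟫ + ‖sgdIterate ℓ' a n - u‖ ^ 2
      ≤ ‖u‖ ^ 2 + 2 * n * ε := by
  induction n with
  | zero => simp [sgdIterate]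
  | succ n ih =>
    have hstep := norm_sgd_step_sub_sq_le hgrad hsq (ha n) (sgdIterate ℓ' a n) u
    rw [sum_range_succ, sgdIterate]
    push_cast
    linarith [hu n]

end SGD

section Margin

variable {E : Type*} [NormedAddCommGroup E] [InnerProductSpace ℝ E] {γ : ℝ} {w₀ : E}

theorem logisticLoss_inner_div_smul_le (hγ : 0 < γ) {c : ℝ} (hc : 0 ≤ c) {y : E}
    (hy : γ ≤ ⟪y, w₀⟫) : logisticLoss ⟪y, (c / γ) • w₀⟫ ≤ exp (-c) := by
  have hcy : c ≤ ⟪y, (c / γ) • w₀⟫ := by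
    rw [real_inner_smul_right]
    calc c = c / γ * γ := by field_simp
      _ ≤ c / γ * ⟪y, w₀⟫ := by gcongr
  exact (antitone_logisticLoss hcy).trans (logisticLoss_le_exp_neg c)

variable {a : ℕ → E} {T : ℕ}

theorem logistic_sgdIterate_potential_le (hγ : 0 < γ) (hw₀ : ‖w₀‖ = 1) (ha : ∀ k, ‖a k‖ ≤ 1)
    (hsep : ∀ k, γ ≤ ⟪a k, w₀⟫) (hT : 1 ≤ γ ^ 2 * T) {n : ℕ} (hn : n ≤ T) :
    3 / 2 * ∑ k ∈ range n, logisticLoss ⟪a k, sgdIterate (deriv logisticLoss) a k⟫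
        + ‖sgdIterate (deriv logisticLoss) a n - (log (γ ^ 2 * T) / γ) • w₀‖ ^ 2
      ≤ (log (γ ^ 2 * T) ^ 2 + 2) / γ ^ 2 := by
  set L := log (γ ^ 2 * T)
  have hL : 0 ≤ L := log_nonneg hT
  have hpot := sgdIterate_potential_le deriv_logisticLoss_mul_sub_le deriv_logisticLoss_sq_le ha
    (fun k => logisticLoss_inner_div_smul_le hγ hL (hsep k)) n
  have hu : ‖(L / γ) • w₀‖ ^ 2 = L ^ 2 / γ ^ 2 := by
    rw [norm_smul, hw₀, mul_one, norm_div, Real.norm_of_nonneg hL, Real.norm_of_nonneg hγ.le,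
      div_pow]
  have hT0 : (0 : ℝ) < T := pos_of_mul_pos_right (by linarith) (sq_nonneg γ)
  have hε : 2 * n * exp (-L) ≤ 2 / γ ^ 2 := by
    rw [exp_neg, exp_log (by linarith)]
    calc 2 * n * (γ ^ 2 * T)⁻¹ = 2 / γ ^ 2 * (n / T) := by field_simp
      _ ≤ 2 / γ ^ 2 * 1 := by gcongr; exact div_le_one_of_le₀ (by exact_mod_cast hn) hT0.le
      _ = 2 / γ ^ 2 := mul_one _
  rw [hu] at hpot
  rw [add_div]
  linarith

theorem sum_logisticLoss_sgdIterate_le (hγ : 0 < γ) (hw₀ : ‖w₀‖ = 1) (ha : ∀ k, ‖a k‖ ≤ 1)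
    (hsep : ∀ k, γ ≤ ⟪a k, w₀⟫) (hT : 1 ≤ γ ^ 2 * T) :
    ∑ k ∈ range T, logisticLoss ⟪a k, sgdIterate (deriv logisticLoss) a k⟫
      ≤ 2 * (log (γ ^ 2 * T) ^ 2 + 2) / (3 * γ ^ 2) := by
  have h := logistic_sgdIterate_potential_le hγ hw₀ ha hsep hT le_rfl
  have hdist := sq_nonneg ‖sgdIterate (deriv logisticLoss) a T - (log (γ ^ 2 * T) / γ) • w₀‖
  calc _ ≤ 2 / 3 * ((log (γ ^ 2 * T) ^ 2 + 2) / γ ^ 2) := by linarith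
    _ = _ := by ring

theorem norm_sgdIterate_le (hγ : 0 < γ) (hw₀ : ‖w₀‖ = 1) (ha : ∀ k, ‖a k‖ ≤ 1)
    (hsep : ∀ k, γ ≤ ⟪a k, w₀⟫) (hT : 1 ≤ γ ^ 2 * T) {n : ℕ} (hn : n ≤ T) :
    ‖sgdIterate (deriv logisticLoss) a n‖ ≤ 2 * (log (γ ^ 2 * T) + 1) / γ := by
  set L := log (γ ^ 2 * T)
  have hL : 0 ≤ L := log_nonneg hT
  have h := logistic_sgdIterate_potential_le hγ hw₀ ha hsep hT hn
  have hsum : 0 ≤ ∑ k ∈ range n, logisticLoss ⟪a k, sgdIterate (deriv logisticLoss) a k⟫ :=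
    sum_nonneg fun k _ => logisticLoss_nonneg _
  have hdist : ‖sgdIterate (deriv logisticLoss) a n - (L / γ) • w₀‖ ≤ (L + 2) / γ := by
    refine (pow_le_pow_iff_left₀ (norm_nonneg _) (by positivity) two_ne_zero).1 ?_
    calc _ ≤ (L ^ 2 + 2) / γ ^ 2 := by linarith
      _ ≤ ((L + 2) / γ) ^ 2 := by rw [div_pow]; gcongr; nlinarith
  have hu : ‖(L / γ) • w₀‖ = L / γ := by
    rw [norm_smul, hw₀, mul_one, Real.norm_of_nonneg (by positivity)]
  calc ‖sgdIterate (deriv logisticLoss) a n‖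
      ≤ ‖(L / γ) • w₀‖ + ‖sgdIterate (deriv logisticLoss) a n - (L / γ) • w₀‖ :=
        norm_le_insert' _ _
    _ ≤ L / γ + (L + 2) / γ := by rw [hu]; gcongr
    _ = 2 * (L + 1) / γ := by ring

end Margin

section Violations

variable {E : Type*} [NormedAddCommGroup E] [InnerProductSpace ℝ E]

/-- A point with normalized margin at most `θ` against `v` has margin at most `θ R` against `v`,
hence logistic loss at least `(1 + exp (θ R))⁻¹` (Markov's inequality). -/
theorem card_filter_inner_normalize_le {X : Type*} [Fintype X] (x : X → E) {v : E} {θ R : ℝ}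
    (hθ : 0 ≤ θ) (hv : ‖v‖ ≤ R) :
    (#{i | ⟪x i, ‖v‖⁻¹ • v⟫ ≤ θ} : ℝ) ≤ (1 + exp (θ * R)) * ∑ i, logisticLoss ⟪x i, v⟫ := by
  have hloss : ∀ i ∈ ({i | ⟪x i, ‖v‖⁻¹ • v⟫ ≤ θ} : Finset X),
      (1 + exp (θ * R))⁻¹ ≤ logisticLoss ⟪x i, v⟫ := by
    intro i hi
    have hiv : ⟪x i, v⟫ ≤ θ * R := by
      rcases eq_or_ne v 0 with rfl | hv0
      · simpa using mul_nonneg hθ ((norm_nonneg _).trans hv)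
      · have hnv : 0 < ‖v‖ := norm_pos_iff.2 hv0
        rw [mem_filter, real_inner_smul_right, inv_mul_le_iff₀ hnv] at hi
        exact hi.2.trans (by rw [mul_comm]; gcongr)
    exact (inv_one_add_exp_le_logisticLoss _).trans (antitone_logisticLoss hiv)
  have hcard := card_nsmul_le_sum _ _ _ hloss
  rw [nsmul_eq_mul] at hcard
  calc (#{i | ⟪x i, ‖v‖⁻¹ • v⟫ ≤ θ} : ℝ)
      = (1 + exp (θ * R)) * (#{i | ⟪x i, ‖v‖⁻¹ • v⟫ ≤ θ} * (1 + exp (θ * R))⁻¹) := by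
        field_simp
    _ ≤ (1 + exp (θ * R)) * ∑ i, logisticLoss ⟪x i, v⟫ := by
        gcongr
        exact hcard.trans (sum_le_sum_of_subset_of_nonneg (filter_subset _ _)
          fun i _ _ => logisticLoss_nonneg _)

theorem logisticLoss_inner_average_le (y : E) (w : ℕ → E) {n : ℕ} (hn : 0 < n) :
    logisticLoss ⟪y, (n : ℝ)⁻¹ • ∑ k ∈ range n, w k⟫
      ≤ (n : ℝ)⁻¹ * ∑ k ∈ range n, logisticLoss ⟪y, w k⟫ := by
  have hjensen := convexOn_logisticLoss.map_sum_le (t := range n) (w := fun _ => (n : ℝ)⁻¹)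
    (p := fun k => ⟪y, w k⟫) (fun _ _ => by positivity) (by simp [hn.ne']) fun _ _ => trivial
  simpa [inner_sum, real_inner_smul_right, mul_sum] using hjensen

variable {γ : ℝ} {w₀ : E} {a : ℕ → E} {T : ℕ}

theorem card_filter_inner_normalize_sgdAverage_le {X : Type*} [Fintype X] (x : X → E)
    (hγ : 0 < γ) (hw₀ : ‖w₀‖ = 1) (ha : ∀ k, ‖a k‖ ≤ 1) (hsep : ∀ k, γ ≤ ⟪a k, w₀⟫)
    (hT : 1 ≤ γ ^ 2 * T) {θ : ℝ} (hθ : 0 ≤ θ) :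
    let v := sgdAverage (deriv logisticLoss) a T
    (#{i | ⟪x i, ‖v‖⁻¹ • v⟫ ≤ θ} : ℝ)
      ≤ (1 + exp (θ * (2 * (log (γ ^ 2 * T) + 1) / γ))) * ((T : ℝ)⁻¹ *
          ∑ k ∈ range T, ∑ i, logisticLoss ⟪x i, sgdIterate (deriv logisticLoss) a k⟫) := by
  intro v
  have hT0 : 0 < T := Nat.pos_of_ne_zero fun h => by norm_num [h] at hT
  have hv : ‖v‖ ≤ 2 * (log (γ ^ 2 * T) + 1) / γ := by
    have hsum := norm_sum_le_of_le (range T) fun k hk =>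
      norm_sgdIterate_le hγ hw₀ ha hsep hT (mem_range.1 hk).le
    rw [sum_const, card_range, nsmul_eq_mul] at hsum
    calc ‖v‖ = (T : ℝ)⁻¹ * ‖∑ k ∈ range T, sgdIterate (deriv logisticLoss) a k‖ := by
          simp [v, sgdAverage, norm_smul]
      _ ≤ (T : ℝ)⁻¹ * (T * (2 * (log (γ ^ 2 * T) + 1) / γ)) := by gcongr
      _ = 2 * (log (γ ^ 2 * T) + 1) / γ := by field_simp
  refine (card_filter_inner_normalize_le x hθ hv).trans ?_
  gcongr
  rw [sum_comm, mul_sum]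
  exact sum_le_sum fun i _ => logisticLoss_inner_average_le (x i) _ hT0

end Violations

/-- `(ι, j) ↦ (update ι s j, ι s)` is an involution exchanging the two sides. -/
theorem sum_sum_eq_card_mul_sum_of_update_eq {I X : Type*} [Fintype I] [DecidableEq I]
    [Fintype X] (H : X → (I → X) → ℝ) (s : I)
    (hH : ∀ ι j, H j (Function.update ι s j) = H j ι) :
    ∑ ι : I → X, ∑ j, H j ι = Fintype.card X * ∑ ι : I → X, H (ι s) ι := by
  have hinvol : Function.Involutive fun p : (I → X) × X => (Function.update p.1 s p.2, p.1 s) :=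
    fun p => by simp
  calc ∑ ι : I → X, ∑ j, H j ι = ∑ p : (I → X) × X, H p.2 p.1 :=
        (Fintype.sum_prod_type fun p : (I → X) × X => H p.2 p.1).symm
    _ = ∑ p : (I → X) × X, H (p.1 s) p.1 :=
        Fintype.sum_equiv (hinvol.toPerm _) _ _ fun p => by simp [hH]
    _ = Fintype.card X * ∑ ι : I → X, H (ι s) ι := by
        rw [Fintype.sum_prod_type]
        simp [mul_sum, mul_comm]

section CyclicSampling

variable {E : Type*} [NormedAddCommGroup E] [InnerProductSpace ℝ E] {X : Type*} {T : ℕ} [NeZero T]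

/-- Step `k` of SGD driven by `ι : Fin T → X`, the one producing the paper's `w_{k+2}`, uses the
sample `ι (k + 1)` for `k + 1 < T` as in the statement; the step that would produce `w_{T+1}` uses
`ι 0`, on which no iterate depends, so that it is a fresh sample for `w_T`. -/
def cyclicSample (ι : Fin T → X) (k : ℕ) : X := ι (Fin.ofNat T (k + 1))

theorem sgdIterate_update_cyclicSample (ℓ' : ℝ → ℝ) (x : X → E) (ι : Fin T → X) {k : ℕ}
    (hk : k < T) (c : X) :
    sgdIterate ℓ' (x ∘ cyclicSample (Function.update ι (Fin.ofNat T (k + 1)) c)) k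
      = sgdIterate ℓ' (x ∘ cyclicSample ι) k := by
  refine sgdIterate_congr ℓ' fun j hj => ?_
  simp only [Function.comp_apply, cyclicSample]
  rw [Function.update_of_ne]
  intro h
  have h' := congrArg Fin.val h
  rw [Fin.val_ofNat, Fin.val_ofNat, Nat.mod_eq_of_lt (by omega : j + 1 < T)] at h'
  rcases (show k + 1 ≤ T by omega).lt_or_eq with hlt | heq
  · rw [Nat.mod_eq_of_lt hlt] at h'
    omega
  · rw [heq, Nat.mod_self] at h'
    omega

theorem inv_smul_sum_Icc_eq_sgdAverage (ℓ' : ℝ → ℝ) (x : X → E) (ι : Fin T → X) {W : ℕ → E}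
    (h1 : W 1 = 0)
    (hrec : ∀ t : Fin T, 1 ≤ (t : ℕ) → W (t + 1) = W t - ℓ' ⟪x (ι t), W t⟫ • x (ι t)) :
    (T : ℝ)⁻¹ • ∑ t ∈ Icc 1 T, W t = sgdAverage ℓ' (x ∘ cyclicSample ι) T := by
  have hW : ∀ k < T, W (k + 1) = sgdIterate ℓ' (x ∘ cyclicSample ι) k :=
    eq_sgdIterate_of_succ_eq (b := fun t => x (ι (Fin.ofNat T t))) h1 fun t ht1 htT => by
      have hval : (Fin.ofNat T t : ℕ) = t := by rw [Fin.val_ofNat, Nat.mod_eq_of_lt htT]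
      simpa only [hval] using hrec (Fin.ofNat T t) (by rwa [hval])
  rw [sgdAverage, ← Ico_add_one_right_eq_Icc, sum_Ico_eq_sum_range, add_tsub_cancel_right]
  exact congrArg _ (sum_congr rfl fun k hk => by rw [add_comm, hW k (mem_range.1 hk)])

theorem sum_sum_sum_logisticLoss_sgdIterate_le [Fintype X] (x : X → E) {γ : ℝ}
    {w₀ : E} (hγ : 0 < γ) (hw₀ : ‖w₀‖ = 1) (hx : ∀ i, ‖x i‖ ≤ 1) (hsep : ∀ i, γ ≤ ⟪x i, w₀⟫)
    (hT : 1 ≤ γ ^ 2 * T) :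
    ∑ ι : Fin T → X, ∑ k ∈ range T, ∑ i,
        logisticLoss ⟪x i, sgdIterate (deriv logisticLoss) (x ∘ cyclicSample ι) k⟫
      ≤ Fintype.card X * (Fintype.card X ^ T * (2 * (log (γ ^ 2 * T) ^ 2 + 2) / (3 * γ ^ 2))) := by
  set path := fun ι : Fin T → X => sgdIterate (deriv logisticLoss) (x ∘ cyclicSample ι)
  calc _ = ∑ k ∈ range T, ∑ ι : Fin T → X, ∑ i, logisticLoss ⟪x i, path ι k⟫ := sum_comm
    _ = ∑ k ∈ range T, Fintype.card X *
          ∑ ι : Fin T → X, logisticLoss ⟪x (cyclicSample ι k), path ι k⟫ :=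
        sum_congr rfl fun k hk => sum_sum_eq_card_mul_sum_of_update_eq
          (fun i ι => logisticLoss ⟪x i, path ι k⟫) _ fun ι c => by
            simp only [path, sgdIterate_update_cyclicSample _ _ _ (mem_range.1 hk)]
    _ = Fintype.card X * ∑ ι : Fin T → X, ∑ k ∈ range T,
          logisticLoss ⟪x (cyclicSample ι k), path ι k⟫ := by rw [← mul_sum, sum_comm]
    _ ≤ Fintype.card X * ∑ _ι : Fin T → X, 2 * (log (γ ^ 2 * T) ^ 2 + 2) / (3 * γ ^ 2) := by
        gcongr with ι
        exact sum_logisticLoss_sgdIterate_le hγ hw₀ (fun _ => hx _) (fun _ => hsep _) hT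
    _ = _ := by simp

end CyclicSampling

theorem one_add_exp_mul_div_le {γ α : ℝ} {T : ℕ} (hγ : 0 < γ) (hγ1 : γ ≤ 1) (hT : 1 < γ ^ 2 * T)
    (hα : α ≤ 1) :
    (1 + exp ((1 - α) * γ / 5 * (2 * (log (γ ^ 2 * T) + 1) / γ)))
        * (2 * (log (γ ^ 2 * T) ^ 2 + 2) / (3 * γ ^ 2)) / T
      ≤ (8 + 4 * log (γ ^ 2 * T) ^ 2) / (3 * γ ^ 2 * (T : ℝ) ^ α) := by
  set L := log (γ ^ 2 * T)
  have hT2 : (2 : ℝ) ≤ T := by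
    have : (1 : ℝ) < T := by nlinarith
    exact_mod_cast (show 2 ≤ T by exact_mod_cast this)
  have hLT : L ≤ log T := log_le_log (by positivity)
    (mul_le_of_le_one_left (Nat.cast_nonneg _) (pow_le_one₀ hγ.le hγ1))
  have hlogT : 2 / 3 < log T :=
    (show (2 : ℝ) / 3 < log 2 by linarith [log_two_gt_d9]).trans_le (log_le_log two_pos hT2)
  have hexp : exp ((1 - α) * γ / 5 * (2 * (L + 1) / γ)) ≤ (T : ℝ) ^ (1 - α) := by
    rw [rpow_def_of_pos (by linarith), mul_comm (log _)]
    refine exp_le_exp.2 ?_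
    calc (1 - α) * γ / 5 * (2 * (L + 1) / γ) = (1 - α) * (2 * (L + 1) / 5) := by field_simp
      _ ≤ (1 - α) * log T := mul_le_mul_of_nonneg_left (by linarith) (by linarith)
  have hC : 1 + exp ((1 - α) * γ / 5 * (2 * (L + 1) / γ)) ≤ 2 * (T : ℝ) ^ (1 - α) := by
    linarith [one_le_rpow (by linarith : (1 : ℝ) ≤ T) (by linarith : 0 ≤ 1 - α)]
  calc _ ≤ 2 * (T : ℝ) ^ (1 - α) * (2 * (L ^ 2 + 2) / (3 * γ ^ 2)) / T := by gcongr
    _ = _ := by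
        rw [rpow_sub (by linarith), rpow_one]
        field_simp
        ring

/-- Theorem 7 of the paper: margin quantiles for averaged
SGD with the logistic loss. Randomness is modelled by a uniformly random
sequence of indices `ι : Fin T → Fin m` (the index `ι t` is the one used in the
update producing `w_{t+1}`, for `1 ≤ t < T`). For any `T > 1/γ²` and
`α ∈ [0,1]`, letting `δ(ι)` be the fraction of indices `i` with
`xᵢᵀ(v_T/‖v_T‖) ≤ (1−α)γ/5` (when `v_T = 0` all indices count as violations,
as `v_T/‖v_T‖ = 0` then), the expectation of `δ` is at most
`(8 + 4log²(γ²T))/(3γ²T^α)`. -/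
theorem stmt_13 {d m : ℕ} (hm : 0 < m)
    (x : Fin m → EuclideanSpace ℝ (Fin d)) (hx : ∀ i, ‖x i‖ ≤ 1)
    (γ : ℝ) (hγ : γ ∈ Set.Ioc (0 : ℝ) 1)
    (w₀ : EuclideanSpace ℝ (Fin d)) (hw₀ : ‖w₀‖ = 1)
    (hsep : ∀ i, γ ≤ ⟪x i, w₀⟫)
    (ℓ ℓ' : ℝ → ℝ)
    (hℓ : ∀ z, ℓ z = Real.log (1 + Real.exp (-z)))
    (hderiv : ∀ z, HasDerivAt ℓ (ℓ' z) z)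
    (T : ℕ) (hT : 1 / γ ^ 2 < (T : ℝ))
    (α : ℝ) (hα : α ∈ Set.Icc (0 : ℝ) 1)
    (W : (Fin T → Fin m) → ℕ → EuclideanSpace ℝ (Fin d))
    (hW1 : ∀ ι, W ι 1 = 0)
    (hWrec : ∀ ι (t : Fin T), 1 ≤ (t : ℕ) →
      W ι ((t : ℕ) + 1) = W ι (t : ℕ) - ℓ' ⟪x (ι t), W ι (t : ℕ)⟫ • x (ι t))
    (v : (Fin T → Fin m) → EuclideanSpace ℝ (Fin d))
    (hv : ∀ ι, v ι = (T : ℝ)⁻¹ • ∑ t ∈ Finset.Icc 1 T, W ι t)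
    (δ : (Fin T → Fin m) → ℝ)
    (hδ : ∀ ι, δ ι = ((Finset.univ.filter (fun i : Fin m =>
      ⟪x i, ‖v ι‖⁻¹ • v ι⟫ ≤ (1 - α) * γ / 5)).card : ℝ) / m) :
    ((m : ℝ) ^ T)⁻¹ * ∑ ι : Fin T → Fin m, δ ι ≤
      (8 + 4 * (Real.log (γ ^ 2 * T)) ^ 2) / (3 * γ ^ 2 * (T : ℝ) ^ α) := by
  obtain ⟨hγ0, hγ1⟩ := hγ
  obtain rfl : ℓ = logisticLoss := funext hℓ
  obtain rfl : ℓ' = deriv logisticLoss := funext fun z => (hderiv z).deriv.symm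
  have hγT : 1 < γ ^ 2 * T := by rwa [div_lt_iff₀ (by positivity), mul_comm] at hT
  have : NeZero T := ⟨fun h => by norm_num [h] at hγT⟩
  set path := fun ι : Fin T → Fin m => sgdIterate (deriv logisticLoss) (x ∘ cyclicSample ι)
  set C := 1 + exp ((1 - α) * γ / 5 * (2 * (log (γ ^ 2 * T) + 1) / γ))
  set D := 2 * (log (γ ^ 2 * T) ^ 2 + 2) / (3 * γ ^ 2)
  have hm0 : (0 : ℝ) < m := by exact_mod_cast hm
  have hδle : ∀ ι, δ ι ≤ C / m *
      ((T : ℝ)⁻¹ * ∑ k ∈ range T, ∑ i, logisticLoss ⟪x i, path ι k⟫) := fun ι => by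
    rw [hδ, hv, inv_smul_sum_Icc_eq_sgdAverage _ x ι (hW1 ι) (hWrec ι), div_mul_eq_mul_div,
      div_le_div_iff_of_pos_right hm0]
    exact card_filter_inner_normalize_sgdAverage_le x hγ0 hw₀ (fun _ => hx _) (fun _ => hsep _)
      hγT.le (div_nonneg (mul_nonneg (sub_nonneg.2 hα.2) hγ0.le) (by norm_num))
  have hsum := sum_sum_sum_logisticLoss_sgdIterate_le x hγ0 hw₀ hx hsep hγT.le
  rw [Fintype.card_fin] at hsum
  calc ((m : ℝ) ^ T)⁻¹ * ∑ ι, δ ι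
      ≤ ((m : ℝ) ^ T)⁻¹ * ∑ ι, C / m *
          ((T : ℝ)⁻¹ * ∑ k ∈ range T, ∑ i, logisticLoss ⟪x i, path ι k⟫) := by
        gcongr with ι; exact hδle ι
    _ = C / (m * m ^ T * T) * ∑ ι, ∑ k ∈ range T, ∑ i, logisticLoss ⟪x i, path ι k⟫ := by
        simp only [← mul_sum]; field_simp
    _ ≤ C / (m * m ^ T * T) * (m * (m ^ T * D)) := by gcongr
    _ = C * D / T := by field_simp
    _ ≤ _ := one_add_exp_mul_div_le hγ0 hγ1 hγT hα.2
end

section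
/- Let x_1,…,x_m ∈ ℝ^d satisfy max_i ‖x_i‖ ≤ 1 and be separable with margin γ ∈ (0,1]. Let b > 0, and let ℓ be a convex, differentiable, monotonically decreasing loss admitting an inverse ℓ⁻¹ on (0, ℓ(0)], whose derivative ℓ' is μ-Lipschitz, and which satisfies ℓ(z) = z^(−b) for all z ≥ 1. Consider gradient descent iterates w_1 = 0, w_{t+1} = w_t − η_t∇L̂(w_t) with 0 < η_t ≤ 1/μ, and let w ≠ 0 be an iterate with L̂(w) = ε for some ε ∈ (0, ℓ(0)). Then for every p ∈ [ε, 1], at least (1−p)·m of the indices i ∈ {1,…,m} satisfy x_iᵀ(w/‖w‖) > (γ/2)·p^(1/b). -/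
/-! The empirical risk is convex and `μ`-smooth, so a gradient step with `η ≤ 1/μ` decreases it
and satisfies `‖w⁺ - u‖² ≤ ‖w - u‖² + 2η (L̂ u - L̂ w⁺)` for every comparator `u`. For
`u = (ε^{-1/b} / γ) • w₀` the margin gives `L̂ u ≤ ε`, which lies below the risk all along the run,
so the distance to `u` never grows and `‖w‖ ≤ 2‖u‖ = 2 ε^{-1/b} / γ`. An index whose normalized
margin is at most `(γ/2) p^{1/b}` then has `xᵢᵀw ≤ (p/ε)^{1/b}`, hence loss at least `ε/p`, and
Markov's inequality applied to `L̂ w = ε` leaves at most `p m` such indices. -/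

open scoped RealInnerProductSpace

open Finset

theorem ConvexOn.add_mul_sub_le_of_hasDerivAt {f : ℝ → ℝ} {f'v v : ℝ}
    (hf : ConvexOn ℝ Set.univ f) (hd : HasDerivAt f f'v v) (a : ℝ) :
    f v + f'v * (a - v) ≤ f a := by
  rcases lt_trichotomy v a with h | rfl | h
  · have := hf.le_slope_of_hasDerivAt (Set.mem_univ v) (Set.mem_univ a) h hd
    rw [slope_def_field, le_div_iff₀ (sub_pos.2 h)] at this
    linarith
  · simp
  · have := hf.slope_le_of_hasDerivAt (Set.mem_univ a) (Set.mem_univ v) h hd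
    rw [slope_def_field, div_le_iff₀ (sub_pos.2 h)] at this
    linarith

theorem Finset.card_filter_mul_le_sum {ι : Type*} {s : Finset ι} {a : ι → ℝ}
    (ha : ∀ i ∈ s, 0 ≤ a i) (c : ℝ) : #{i ∈ s | c ≤ a i} * c ≤ ∑ i ∈ s, a i := by
  calc (#{i ∈ s | c ≤ a i} : ℝ) * c ≤ ∑ i ∈ s with c ≤ a i, a i := by
        rw [← nsmul_eq_mul]
        exact card_nsmul_le_sum _ _ _ fun i hi => (mem_filter.1 hi).2
    _ ≤ ∑ i ∈ s, a i :=
        sum_le_sum_of_subset_of_nonneg (filter_subset _ _) fun i hi _ => ha i hi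

variable {E : Type*} [NormedAddCommGroup E] [InnerProductSpace ℝ E]

section Smooth

variable [CompleteSpace E] {f : E → ℝ} {G : E → E} {μ : ℝ}

theorem le_add_inner_add_of_lipschitz_gradient (hG : ∀ z, HasGradientAt f (G z) z)
    (hLip : ∀ a b, ‖G a - G b‖ ≤ μ * ‖a - b‖) (x v : E) :
    f (x + v) ≤ f x + ⟪G x, v⟫ + μ / 2 * ‖v‖ ^ 2 := by
  -- `f` along the segment minus its quadratic model: the Lipschitz bound makes `h' ≤ 0` on
  -- `[0, 1]`, and the mean value theorem gives `h 1 ≤ h 0`.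
  set h : ℝ → ℝ := fun τ => f (x + τ • v) - τ * ⟪G x, v⟫ - μ / 2 * τ ^ 2 * ‖v‖ ^ 2
  set h' : ℝ → ℝ := fun τ => ⟪G (x + τ • v), v⟫ - ⟪G x, v⟫ - μ * τ * ‖v‖ ^ 2
  have hderiv : ∀ τ, HasDerivAt h (h' τ) τ := by
    intro τ
    have hline : HasDerivAt (fun τ : ℝ => x + τ • v) v τ := by
      simpa using ((hasDerivAt_id τ).smul_const v).const_add x
    have hf := (hG (x + τ • v)).hasFDerivAt.comp_hasDerivAt τ hline
    simp only [InnerProductSpace.toDual_apply_apply] at hf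
    exact ((hf.sub ((hasDerivAt_id τ).mul_const ⟪G x, v⟫)).sub
      (((hasDerivAt_pow 2 τ).const_mul (μ / 2)).mul_const (‖v‖ ^ 2))).congr_deriv
      (by simp only [h']; ring)
  obtain ⟨c, ⟨hc0, -⟩, hc⟩ := exists_hasDerivAt_eq_slope h h' zero_lt_one
    (fun τ _ => (hderiv τ).continuousAt.continuousWithinAt) (fun τ _ => hderiv τ)
  have hslope : h' c ≤ 0 := by
    have : ⟪G (x + c • v) - G x, v⟫ ≤ μ * c * ‖v‖ ^ 2 :=
      calc ⟪G (x + c • v) - G x, v⟫ ≤ ‖G (x + c • v) - G x‖ * ‖v‖ := real_inner_le_norm _ _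
        _ ≤ μ * ‖x + c • v - x‖ * ‖v‖ := by gcongr; exact hLip _ _
        _ = μ * c * ‖v‖ ^ 2 := by
          rw [add_sub_cancel_left, norm_smul, Real.norm_of_nonneg hc0.le]; ring
    simp only [h', ← inner_sub_left]
    linarith
  simp only [h, hc, zero_smul, one_smul, add_zero, sub_zero] at hslope
  norm_num at hslope
  linarith

variable (hG : ∀ z, HasGradientAt f (G z) z) (hLip : ∀ a b, ‖G a - G b‖ ≤ μ * ‖a - b‖)
include hG hLip

theorem apply_gradient_step_le {η : ℝ} (hη : 0 ≤ η) (hημ : η * μ ≤ 1) (x : E) :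
    f (x - η • G x) ≤ f x - η / 2 * ‖G x‖ ^ 2 := by
  have h := le_add_inner_add_of_lipschitz_gradient hG hLip x (-(η • G x))
  rw [← sub_eq_add_neg, inner_neg_right, real_inner_smul_right, real_inner_self_eq_norm_sq,
    norm_neg, norm_smul, Real.norm_of_nonneg hη] at h
  nlinarith [mul_le_mul_of_nonneg_right hημ (mul_nonneg hη (sq_nonneg ‖G x‖))]

theorem norm_gradient_step_sub_sq_le (hconv : ∀ u v, f v + ⟪G v, u - v⟫ ≤ f u) {η : ℝ}
    (hη : 0 ≤ η) (hημ : η * μ ≤ 1) (x u : E) :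
    ‖x - η • G x - u‖ ^ 2 ≤ ‖x - u‖ ^ 2 + 2 * η * (f u - f (x - η • G x)) := by
  have hdesc := apply_gradient_step_le hG hLip hη hημ x
  have hfirst : f x - f u ≤ ⟪G x, x - u⟫ := by
    have := hconv u x
    rw [← neg_sub x u, inner_neg_right] at this
    linarith
  have hexpand :
      ‖x - η • G x - u‖ ^ 2 = ‖x - u‖ ^ 2 - 2 * η * ⟪G x, x - u⟫ + η ^ 2 * ‖G x‖ ^ 2 := by
    rw [sub_right_comm, norm_sub_sq_real, real_inner_smul_right, norm_smul, mul_pow,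
      Real.norm_of_nonneg hη, real_inner_comm]
    ring
  rw [hexpand]
  nlinarith [mul_le_mul_of_nonneg_left hfirst hη, mul_le_mul_of_nonneg_left hdesc hη]

variable {η : ℕ → ℝ} {w : ℕ → E} (hη : ∀ t, 0 ≤ η t) (hημ : ∀ t, η t * μ ≤ 1)
  (hrec : ∀ t, 1 ≤ t → w (t + 1) = w t - η t • G (w t))
include hη hημ hrec

theorem antitoneOn_gradientDescent : AntitoneOn (f ∘ w) (Set.Ici 1) :=
  antitoneOn_nat_Ici_of_succ_le fun t ht => by
    simp only [Function.comp_apply, hrec t ht]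
    nlinarith [apply_gradient_step_le hG hLip (hη t) (hημ t) (w t), sq_nonneg ‖G (w t)‖, hη t]

theorem norm_gradientDescent_sub_le (hconv : ∀ u v, f v + ⟪G v, u - v⟫ ≤ f u) {t : ℕ} {u : E}
    (hu : f u ≤ f (w t)) {s : ℕ} (hs : 1 ≤ s) (hst : s ≤ t) : ‖w s - u‖ ≤ ‖w 1 - u‖ := by
  induction s, hs using Nat.le_induction with
  | base => rfl
  | succ s hs ih =>
    have hmono : f u ≤ f (w (s + 1)) :=
      hu.trans (antitoneOn_gradientDescent hG hLip hη hημ hrec (Set.mem_Ici.2 (by omega))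
        (Set.mem_Ici.2 (by omega)) hst)
    have hstep := norm_gradient_step_sub_sq_le hG hLip hconv (hη s) (hημ s) (w s) u
    rw [← hrec s hs] at hstep
    refine (pow_le_pow_iff_left₀ (norm_nonneg _) (norm_nonneg _) two_ne_zero).1 ?_
    nlinarith [ih (by omega), mul_le_mul_of_nonneg_left hmono (hη s), norm_nonneg (w s - u),
      norm_nonneg (w 1 - u)]

theorem norm_gradientDescent_le_two_mul (hconv : ∀ u v, f v + ⟪G v, u - v⟫ ≤ f u)
    (hw1 : w 1 = 0) {t : ℕ} (ht : 1 ≤ t) {u : E} (hu : f u ≤ f (w t)) : ‖w t‖ ≤ 2 * ‖u‖ := by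
  have := norm_gradientDescent_sub_le hG hLip hη hημ hrec hconv hu ht le_rfl
  rw [hw1, zero_sub, norm_neg] at this
  linarith [norm_le_norm_sub_add (w t) u]

end Smooth

noncomputable section EmpiricalRisk

variable {ι : Type*} [Fintype ι] (ℓ ℓ' : ℝ → ℝ) (x : ι → E)

def empiricalRisk (v : E) : ℝ := (Fintype.card ι : ℝ)⁻¹ * ∑ i, ℓ ⟪x i, v⟫

def empiricalRiskGrad (v : E) : E := (Fintype.card ι : ℝ)⁻¹ • ∑ i, ℓ' ⟪x i, v⟫ • x i

variable {ℓ ℓ' x}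

theorem hasGradientAt_empiricalRisk [CompleteSpace E] (hd : ∀ z, HasDerivAt ℓ (ℓ' z) z)
    (v : E) :
    HasGradientAt (empiricalRisk ℓ x) (empiricalRiskGrad ℓ' x v) v := by
  rw [hasGradientAt_iff_hasFDerivAt]
  have hsum : HasFDerivAt (fun u : E => ∑ i, ℓ ⟪x i, u⟫)
      (∑ i, ℓ' ⟪x i, v⟫ • innerSL ℝ (x i)) v :=
    HasFDerivAt.fun_sum fun i _ => (hd _).comp_hasFDerivAt v (innerSL ℝ (x i)).hasFDerivAt
  refine (hsum.const_mul (Fintype.card ι : ℝ)⁻¹).congr_fderiv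
    (ContinuousLinearMap.ext fun u => ?_)
  simp [empiricalRiskGrad]

theorem norm_empiricalRiskGrad_sub_le (hx : ∀ i, ‖x i‖ ≤ 1) {μ : ℝ} (hμ : 0 ≤ μ)
    (hlip : ∀ a b, |ℓ' a - ℓ' b| ≤ μ * |a - b|) (u v : E) :
    ‖empiricalRiskGrad ℓ' x u - empiricalRiskGrad ℓ' x v‖ ≤ μ * ‖u - v‖ := by
  have hterm : ∀ i, ‖ℓ' ⟪x i, u⟫ • x i - ℓ' ⟪x i, v⟫ • x i‖ ≤ μ * ‖u - v‖ := fun i =>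
    calc ‖ℓ' ⟪x i, u⟫ • x i - ℓ' ⟪x i, v⟫ • x i‖ = |ℓ' ⟪x i, u⟫ - ℓ' ⟪x i, v⟫| * ‖x i‖ := by
          rw [← sub_smul, norm_smul, Real.norm_eq_abs]
      _ ≤ μ * |⟪x i, u - v⟫| * 1 := by
          rw [inner_sub_right]; gcongr; exacts [hlip _ _, hx i]
      _ ≤ μ * (‖x i‖ * ‖u - v‖) := by
          rw [mul_one]; gcongr; exact abs_real_inner_le_norm _ _
      _ ≤ μ * ‖u - v‖ := by
          gcongr; exact mul_le_of_le_one_left (norm_nonneg _) (hx i)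
  calc ‖empiricalRiskGrad ℓ' x u - empiricalRiskGrad ℓ' x v‖
      = (Fintype.card ι : ℝ)⁻¹ * ‖∑ i, (ℓ' ⟪x i, u⟫ • x i - ℓ' ⟪x i, v⟫ • x i)‖ := by
        rw [empiricalRiskGrad, empiricalRiskGrad, ← smul_sub, ← sum_sub_distrib, norm_smul,
          norm_inv, Real.norm_natCast]
    _ ≤ (Fintype.card ι : ℝ)⁻¹ * (Fintype.card ι * (μ * ‖u - v‖)) := by
        gcongr
        refine (norm_sum_le _ _).trans ?_
        simpa using sum_le_sum fun i (_ : i ∈ univ) => hterm i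
    _ ≤ μ * ‖u - v‖ := by
        rw [← mul_assoc]
        exact mul_le_of_le_one_left (by positivity) inv_mul_le_one

theorem empiricalRisk_add_inner_le (hconv : ConvexOn ℝ Set.univ ℓ)
    (hd : ∀ z, HasDerivAt ℓ (ℓ' z) z) (u v : E) :
    empiricalRisk ℓ x v + ⟪empiricalRiskGrad ℓ' x v, u - v⟫ ≤ empiricalRisk ℓ x u := by
  have hinner : ⟪empiricalRiskGrad ℓ' x v, u - v⟫
      = (Fintype.card ι : ℝ)⁻¹ * ∑ i, ℓ' ⟪x i, v⟫ * (⟪x i, u⟫ - ⟪x i, v⟫) := by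
    simp only [empiricalRiskGrad, real_inner_smul_left, sum_inner, inner_sub_right, mul_sub,
      sum_sub_distrib]
  rw [empiricalRisk, empiricalRisk, hinner, ← mul_add, ← sum_add_distrib]
  gcongr with i
  exact hconv.add_mul_sub_le_of_hasDerivAt (hd _) _

theorem card_filter_le_of_empiricalRisk [Nonempty ι] (hℓ : ∀ z, 0 ≤ ℓ z) {c : ℝ} (hc : 0 < c)
    (v : E) : (#{i | c ≤ ℓ ⟪x i, v⟫} : ℝ) ≤ Fintype.card ι * empiricalRisk ℓ x v / c := by
  rw [le_div_iff₀ hc, empiricalRisk, mul_inv_cancel_left₀ (by simp)]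
  exact card_filter_mul_le_sum (fun i _ => hℓ _) c

end EmpiricalRisk

section PolynomialTail

variable {ℓ : ℝ → ℝ} {b : ℝ} (hpoly : ∀ z, 1 ≤ z → ℓ z = z ^ (-b))
include hpoly

theorem loss_rpow_one_div_eq_inv (hb : 0 < b) {q : ℝ} (hq : 1 ≤ q) : ℓ (q ^ (1 / b)) = q⁻¹ := by
  have hq0 : 0 ≤ q := zero_le_one.trans hq
  rw [hpoly _ (Real.one_le_rpow hq (by positivity)), ← Real.rpow_mul hq0,
    show 1 / b * -b = -1 by field_simp [hb.ne'], Real.rpow_neg_one]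

theorem loss_nonneg (hanti : Antitone ℓ) (z : ℝ) : 0 ≤ ℓ z :=
  calc 0 ≤ max z 1 ^ (-b) := Real.rpow_nonneg (zero_le_one.trans (le_max_right _ _)) _
    _ = ℓ (max z 1) := (hpoly _ (le_max_right _ _)).symm
    _ ≤ ℓ z := hanti (le_max_left _ _)

variable (hb : 0 < b) (hanti : Antitone ℓ) {γ ε : ℝ} (hγ : 0 < γ) (hε : 0 < ε)
include hb hanti hγ hε

theorem empiricalRisk_smul_le {ι : Type*} [Fintype ι] {x : ι → E} {w₀ : E}
    (hsep : ∀ i, γ ≤ ⟪x i, w₀⟫) (hε1 : ε ≤ 1) :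
    empiricalRisk ℓ x ((ε⁻¹ ^ (1 / b) / γ) • w₀) ≤ ε := by
  have hterm : ∀ i, ℓ ⟪x i, (ε⁻¹ ^ (1 / b) / γ) • w₀⟫ ≤ ε := fun i => by
    calc ℓ ⟪x i, (ε⁻¹ ^ (1 / b) / γ) • w₀⟫ ≤ ℓ (ε⁻¹ ^ (1 / b)) := by
          refine hanti ?_
          rw [real_inner_smul_right, div_mul_eq_mul_div, le_div_iff₀ hγ]
          exact mul_le_mul_of_nonneg_left (hsep i) (by positivity)
      _ = ε := by rw [loss_rpow_one_div_eq_inv hpoly hb ((one_le_inv₀ hε).2 hε1), inv_inv]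
  calc empiricalRisk ℓ x ((ε⁻¹ ^ (1 / b) / γ) • w₀)
      ≤ (Fintype.card ι : ℝ)⁻¹ * (Fintype.card ι * ε) := by
        unfold empiricalRisk
        gcongr
        simpa using sum_le_sum fun i (_ : i ∈ univ) => hterm i
    _ ≤ ε := by
        rw [← mul_assoc]
        exact mul_le_of_le_one_left hε.le inv_mul_le_one

theorem div_le_loss_inner_of_inner_normalize_le {p : ℝ} (hεp : ε ≤ p) {y v : E}
    (hv : ‖v‖ ≤ 2 * (ε⁻¹ ^ (1 / b) / γ)) (hy : ⟪y, ‖v‖⁻¹ • v⟫ ≤ γ / 2 * p ^ (1 / b)) :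
    ε / p ≤ ℓ ⟪y, v⟫ := by
  have hp : 0 < p := hε.trans_le hεp
  have hscale : ⟪y, v⟫ = ‖v‖ * ⟪y, ‖v‖⁻¹ • v⟫ := by
    -- also at `v = 0`, where both sides vanish since `‖0‖⁻¹ = 0`
    rcases eq_or_ne v 0 with rfl | hv0
    · simp
    · rw [real_inner_smul_right, mul_inv_cancel_left₀ (norm_ne_zero_iff.2 hv0)]
  calc ε / p = ℓ ((ε⁻¹ * p) ^ (1 / b)) := by
        rw [loss_rpow_one_div_eq_inv hpoly hb ((one_le_inv_mul₀ hε).2 hεp), mul_inv, inv_inv,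
          div_eq_mul_inv]
    _ ≤ ℓ ⟪y, v⟫ := by
        refine hanti ?_
        calc ⟪y, v⟫ ≤ 2 * (ε⁻¹ ^ (1 / b) / γ) * (γ / 2 * p ^ (1 / b)) := by
              rw [hscale]
              exact (mul_le_mul_of_nonneg_left hy (norm_nonneg v)).trans
                (mul_le_mul_of_nonneg_right hv (by positivity))
          _ = (ε⁻¹ * p) ^ (1 / b) := by
              rw [Real.mul_rpow (by positivity) hp.le]
              field_simp

end PolynomialTail

theorem stmt_17_general {d m : ℕ} (hm : 0 < m)
    (x : Fin m → EuclideanSpace ℝ (Fin d)) (hx : ∀ i, ‖x i‖ ≤ 1)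
    (γ : ℝ) (hγ : γ ∈ Set.Ioc (0 : ℝ) 1)
    (w₀ : EuclideanSpace ℝ (Fin d)) (hw₀ : ‖w₀‖ = 1)
    (hsep : ∀ i, γ ≤ ⟪x i, w₀⟫)
    (b : ℝ) (hb : 0 < b)
    (ℓ ℓ' : ℝ → ℝ) (hconv : ConvexOn ℝ Set.univ ℓ)
    (hderiv : ∀ z, HasDerivAt ℓ (ℓ' z) z)
    (hanti : StrictAnti ℓ)
    (hpoly : ∀ z : ℝ, 1 ≤ z → ℓ z = z ^ (-b))
    (μ : ℝ) (hμ : 0 < μ) (hlip : ∀ a b' : ℝ, |ℓ' a - ℓ' b'| ≤ μ * |a - b'|)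
    (L : EuclideanSpace ℝ (Fin d) → ℝ)
    (hL : ∀ v, L v = (1 / m) * ∑ i, ℓ ⟪x i, v⟫)
    (η : ℕ → ℝ) (hη : ∀ t, 0 < η t ∧ η t ≤ 1 / μ)
    (w : ℕ → EuclideanSpace ℝ (Fin d)) (hw1 : w 1 = 0)
    (hrec : ∀ t, 1 ≤ t → w (t + 1) = w t - η t • gradient L (w t))
    (t₀ : ℕ) (ht₀ : 1 ≤ t₀)
    (ε : ℝ) (hε : ε ∈ Set.Ioo (0 : ℝ) (ℓ 0)) (hLw : L (w t₀) = ε)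
    (p : ℝ) (hp : p ∈ Set.Icc ε 1) :
    ∃ S : Finset (Fin m), (1 - p) * m ≤ S.card ∧
      ∀ i ∈ S, γ / 2 * p ^ (1 / b) < ⟪x i, ‖w t₀‖⁻¹ • w t₀⟫ := by
  obtain ⟨hγ0, -⟩ := hγ
  obtain ⟨hε0, -⟩ := hε
  obtain ⟨hεp, hp1⟩ := hp
  have hp0 : 0 < p := hε0.trans_le hεp
  have : Nonempty (Fin m) := ⟨⟨0, hm⟩⟩
  set τ := γ / 2 * p ^ (1 / b)
  obtain rfl : L = empiricalRisk ℓ x := funext fun v => by simp [hL, empiricalRisk]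
  have hgrad := hasGradientAt_empiricalRisk (x := x) hderiv
  have hnorm : ‖w t₀‖ ≤ 2 * (ε⁻¹ ^ (1 / b) / γ) := by
    have hcomp := (empiricalRisk_smul_le hpoly hb hanti.antitone hγ0 hε0 hsep
      (hεp.trans hp1)).trans hLw.ge
    have := norm_gradientDescent_le_two_mul hgrad (norm_empiricalRiskGrad_sub_le hx hμ.le hlip)
      (fun t => (hη t).1.le) (fun t => (le_div_iff₀ hμ).1 (hη t).2)
      (fun t ht => by rw [hrec t ht, (hgrad _).gradient])
      (empiricalRisk_add_inner_le hconv hderiv) hw1 ht₀ hcomp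
    rwa [norm_smul, hw₀, mul_one, Real.norm_of_nonneg (by positivity)] at this
  have hcard_far : (#{i | ¬ τ < ⟪x i, ‖w t₀‖⁻¹ • w t₀⟫} : ℝ) ≤ p * m := by
    have := card_filter_le_of_empiricalRisk (x := x) (loss_nonneg hpoly hanti.antitone)
      (div_pos hε0 hp0) (w t₀)
    rw [hLw, Fintype.card_fin, mul_div_assoc, div_div_cancel₀ hε0.ne', mul_comm] at this
    refine le_trans (Nat.cast_le.2 (card_le_card ?_)) this
    exact monotone_filter_right _ fun i _ hi => div_le_loss_inner_of_inner_normalize_le hpoly hb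
      hanti.antitone hγ0 hε0 hεp hnorm (not_lt.1 hi)
  refine ⟨({i | τ < ⟪x i, ‖w t₀‖⁻¹ • w t₀⟫} : Finset (Fin m)), ?_,
    fun i hi => (mem_filter.1 hi).2⟩
  have hsplit := card_filter_add_card_filter_not (s := univ) fun i => τ < ⟪x i, ‖w t₀‖⁻¹ • w t₀⟫
  rw [card_univ, Fintype.card_fin] at hsplit
  have := congrArg (Nat.cast (R := ℝ)) hsplit
  push_cast at this
  linarith

/-- polynomially-tailed losses, Theorem 9 of the paper.
Under the separability, loss and smoothness assumptions, with `ℓ(z) = z^{−b}`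
for `z ≥ 1`, if `w ≠ 0` is a gradient descent iterate with
`L̂(w) = ε ∈ (0, ℓ(0))`, then for every `p ∈ [ε, 1]`, at least `(1 − p)·m` of
the indices `i` satisfy `xᵢᵀ(w/‖w‖) > (γ/2)·p^{1/b}`. -/
theorem stmt_17 {d m : ℕ} (hm : 0 < m)
    (x : Fin m → EuclideanSpace ℝ (Fin d)) (hx : ∀ i, ‖x i‖ ≤ 1)
    (γ : ℝ) (hγ : γ ∈ Set.Ioc (0 : ℝ) 1)
    (w₀ : EuclideanSpace ℝ (Fin d)) (hw₀ : ‖w₀‖ = 1)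
    (hsep : ∀ i, γ ≤ ⟪x i, w₀⟫)
    (b : ℝ) (hb : 0 < b)
    (ℓ ℓ' : ℝ → ℝ) (hconv : ConvexOn ℝ Set.univ ℓ)
    (hderiv : ∀ z, HasDerivAt ℓ (ℓ' z) z)
    (hanti : StrictAnti ℓ)
    (ℓinv : ℝ → ℝ) (hinv : ∀ z ∈ Set.Ioc (0 : ℝ) (ℓ 0), ℓ (ℓinv z) = z)
    (hpoly : ∀ z : ℝ, 1 ≤ z → ℓ z = z ^ (-b))
    (μ : ℝ) (hμ : 0 < μ) (hlip : ∀ a b' : ℝ, |ℓ' a - ℓ' b'| ≤ μ * |a - b'|)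
    (L : EuclideanSpace ℝ (Fin d) → ℝ)
    (hL : ∀ v, L v = (1 / m) * ∑ i, ℓ ⟪x i, v⟫)
    (η : ℕ → ℝ) (hη : ∀ t, 0 < η t ∧ η t ≤ 1 / μ)
    (w : ℕ → EuclideanSpace ℝ (Fin d)) (hw1 : w 1 = 0)
    (hrec : ∀ t, 1 ≤ t → w (t + 1) = w t - η t • gradient L (w t))
    (t₀ : ℕ) (ht₀ : 1 ≤ t₀) (hwne : w t₀ ≠ 0)
    (ε : ℝ) (hε : ε ∈ Set.Ioo (0 : ℝ) (ℓ 0)) (hLw : L (w t₀) = ε)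
    (p : ℝ) (hp : p ∈ Set.Icc ε 1) :
    ∃ S : Finset (Fin m), (1 - p) * m ≤ S.card ∧
      ∀ i ∈ S, γ / 2 * p ^ (1 / b) < ⟪x i, ‖w t₀‖⁻¹ • w t₀⟫ :=
  stmt_17_general hm x hx γ hγ w₀ hw₀ hsep b hb ℓ ℓ' hconv hderiv hanti hpoly μ hμ hlip L hL η hη w
    hw1 hrec t₀ ht₀ ε hε hLw p hp
end
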